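/- Let D be a DAG consistent with a tiered ordering τ, and let A, B be non-adjacent nodes. Then there exists a set S d-separating A and B such that every node of S lies in a tier at most max(τ(A), τ(B)). -/

import Mathlib

/-!
Separate `A` and `B` by the parents of whichever of them is not an ancestor of the other,
say `B`; consistency with `τ` puts these parents in tiers at most `τ B`. A path from `B` that
leaves through a parent is blocked at that parent, which cannot be a collider. One that leaves
through a child cannot stay directed all the way to `A`, so it turns back at a collider that is
a descendant of `B`, and no descendant of `B` is a parent of `B`.
-/

/-- Adjacency: an edge in either direction. -/
def Adj {V : Type*} (E : V → V → Prop) (u v : V) : Prop := E u v ∨ E v u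

/-- A directed graph is acyclic if no node lies on a directed cycle. -/
def Acyclic {V : Type*} (E : V → V → Prop) : Prop := ∀ v, ¬ Relation.TransGen E v v

/-- `Desc E v w` : `w` is a descendant of `v` (including `v` itself). -/
def Desc {V : Type*} (E : V → V → Prop) (v w : V) : Prop := Relation.ReflTransGen E v w

/-- A path between `u` and `v`: a nonempty list of distinct, consecutively adjacent
nodes starting at `u` and ending at `v`. -/
def IsPath {V : Type*} (E : V → V → Prop) (u v : V) (p : List V) : Prop :=
  p.Nodup ∧ p.Chain' (Adj E) ∧ p.head? = some u ∧ p.getLast? = some v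

/-- The node at (interior) position `i` of the path `p` is a collider:
both path edges point into it. -/
def ColliderAt {V : Type*} (E : V → V → Prop) (p : List V) (i : ℕ) : Prop :=
  0 < i ∧ ∃ a w b, p[i-1]? = some a ∧ p[i]? = some w ∧ p[i+1]? = some b ∧ E a w ∧ E b w

/-- A path is blocked by `S` if it contains an interior non-collider in `S`, or a
collider none of whose descendants (including itself) is in `S`. -/
def Blocked {V : Type*} (E : V → V → Prop) (S : Set V) (p : List V) : Prop :=
  (∃ i w, 0 < i ∧ i + 1 < p.length ∧ p[i]? = some w ∧ ¬ ColliderAt E p i ∧ w ∈ S) ∨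
  (∃ i w, ColliderAt E p i ∧ p[i]? = some w ∧ ∀ d, Desc E w d → d ∉ S)

/-- `S` d-separates `u` and `v`: every path between them is blocked by `S`. -/
def DSep {V : Type*} (E : V → V → Prop) (S : Set V) (u v : V) : Prop :=
  ∀ p, IsPath E u v p → Blocked E S p

section

variable {V : Type*} {E : V → V → Prop}

theorem Adj.symm {u v : V} (h : Adj E u v) : Adj E v u := Or.symm h

theorem IsPath.reverse {u v : V} {p : List V} (h : IsPath E u v p) : IsPath E v u p.reverse := by
  obtain ⟨hnodup, hchain, hhead, hlast⟩ := h
  exact ⟨List.nodup_reverse.mpr hnodup, List.isChain_reverse.mpr (hchain.imp fun _ _ => Adj.symm),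
    by rwa [List.head?_reverse], by rwa [List.getLast?_reverse]⟩

theorem ColliderAt.reverse {p : List V} {i : ℕ} (h : ColliderAt E p i) :
    ColliderAt E p.reverse (p.length - 1 - i) := by
  obtain ⟨hi, a, w, b, ha, hw, hb, haw, hbw⟩ := h
  have hlt : i + 1 < p.length := List.getElem?_eq_some_iff.mp hb |>.1
  refine ⟨by omega, b, w, a, ?_, ?_, ?_, hbw, haw⟩
  · rwa [List.getElem?_reverse (by omega),
      show p.length - 1 - (p.length - 1 - i - 1) = i + 1 by omega]
  · rwa [List.getElem?_reverse (by omega), show p.length - 1 - (p.length - 1 - i) = i by omega]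
  · rwa [List.getElem?_reverse (by omega),
      show p.length - 1 - (p.length - 1 - i + 1) = i - 1 by omega]

theorem ColliderAt.cons {p : List V} {i : ℕ} (x : V) (h : ColliderAt E p i) :
    ColliderAt E (x :: p) (i + 1) := by
  obtain ⟨hi, a, w, b, ha, hw, hb, haw, hbw⟩ := h
  obtain ⟨j, rfl⟩ := Nat.exists_eq_add_of_lt hi
  exact ⟨Nat.succ_pos _, a, w, b, ha, hw, hb, haw, hbw⟩

theorem Blocked.reverse {S : Set V} {p : List V} (h : Blocked E S p) : Blocked E S p.reverse := by
  rcases h with ⟨i, w, hi, hlt, hw, hnc, hwS⟩ | ⟨i, w, hc, hw, hdesc⟩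
  · have hidx : p.length - 1 - (p.length - 1 - i) = i := by omega
    refine Or.inl ⟨p.length - 1 - i, w, by omega, by rw [List.length_reverse]; omega, ?_,
      fun hc => hnc ?_, hwS⟩
    · rwa [List.getElem?_reverse (by omega), hidx]
    · simpa [hidx] using hc.reverse
  · have hlt : i < p.length := (List.getElem?_eq_some_iff.mp hw).1
    have hidx : p.length - 1 - (p.length - 1 - i) = i := by omega
    exact Or.inr ⟨_, w, hc.reverse, by rwa [List.getElem?_reverse (by omega), hidx], hdesc⟩

theorem DSep.symm {S : Set V} {u v : V} (h : DSep E S u v) : DSep E S v u :=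
  fun p hp => by simpa using (h p.reverse hp.reverse).reverse

theorem List.IsChain.transGen_or_exists_colliderAt {a b : V} {l : List V}
    (hchain : (a :: b :: l).IsChain (Adj E)) (hab : E a b) :
    Relation.TransGen E a ((b :: l).getLast (List.cons_ne_nil _ _)) ∨
      ∃ i w, ColliderAt E (a :: b :: l) i ∧ (a :: b :: l)[i]? = some w ∧
        Relation.TransGen E a w := by
  induction l generalizing a b with
  | nil => exact Or.inl (.single hab)
  | cons c l ih =>
    obtain ⟨-, hchain'⟩ := List.isChain_cons_cons.mp hchain
    rcases (List.isChain_cons_cons.mp hchain').1 with hbc | hcb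
    · rcases ih hchain' hbc with hreach | ⟨i, w, hcol, hw, hreach⟩
      · exact Or.inl (.head hab hreach)
      · exact Or.inr ⟨i + 1, w, hcol.cons a, hw, .head hab hreach⟩
    · exact Or.inr ⟨1, b, ⟨one_pos, a, b, c, rfl, rfl, rfl, hab, hcb⟩, rfl, .single hab⟩

theorem dsep_parents_of_not_transGen (hD : Acyclic E) {u v : V} (huv : u ≠ v)
    (hnadj : ¬ Adj E u v) (hreach : ¬ Relation.TransGen E u v) :
    DSep E {w | E w u} u v := by
  rintro p ⟨-, hchain, hhead, hlast⟩
  rcases p with _ | ⟨x, _ | ⟨y, _ | ⟨z, l⟩⟩⟩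
  · simp at hhead
  · simp only [List.head?_cons, List.getLast?_singleton, Option.some.injEq] at hhead hlast
    exact absurd (hhead.symm.trans hlast) huv
  · simp only [List.head?_cons, List.getLast?_cons_cons, List.getLast?_singleton,
      Option.some.injEq] at hhead hlast
    subst hhead hlast
    exact absurd (List.isChain_pair.mp hchain) hnadj
  obtain rfl : x = u := by simpa using hhead
  rcases (List.isChain_cons_cons.mp hchain).1 with huy | hyu
  · rcases hchain.transGen_or_exists_colliderAt huy with hpath | ⟨i, w, hcol, hw, huw⟩
    · rw [List.getLast?_cons_cons, List.getLast?_eq_some_getLast (List.cons_ne_nil _ _),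
        Option.some.injEq] at hlast
      exact absurd (hlast ▸ hpath) hreach
    · exact Or.inr ⟨i, w, hcol, hw, fun d hwd hdu => hD x ((huw.trans_left hwd).tail hdu)⟩
  · refine Or.inl ⟨1, y, one_pos, by simp, rfl, ?_, hyu⟩
    rintro ⟨-, a, w, b, ha, hw, -, haw, -⟩
    simp only [Nat.sub_self, List.getElem?_cons_zero, List.getElem?_cons_succ,
      Option.some.injEq] at ha hw
    subst ha hw
    exact hD x (.head haw (.single hyu))

end

/-- Non-adjacent nodes of a DAG consistent with τ can be d-separated by a set
contained in tiers at most max(τ(A), τ(B)). -/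
theorem dsep_by_earlier_tiers {V : Type*} (E : V → V → Prop) (hD : Acyclic E)
    (τ : V → ℕ) (hcons : ∀ u v, E u v → τ u ≤ τ v)
    (A B : V) (hAB : A ≠ B) (hnadj : ¬ Adj E A B) :
    ∃ S : Set V, DSep E S A B ∧ ∀ w ∈ S, τ w ≤ max (τ A) (τ B) := by
  by_cases hBA : Relation.TransGen E B A
  · have hnAB : ¬ Relation.TransGen E A B := fun h => hD A (h.trans hBA)
    exact ⟨{w | E w A}, dsep_parents_of_not_transGen hD hAB hnadj hnAB,
      fun w hw => (hcons w A hw).trans (le_max_left _ _)⟩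
  · exact ⟨{w | E w B}, (dsep_parents_of_not_transGen hD hAB.symm (hnadj ∘ Adj.symm) hBA).symm,
      fun w hw => (hcons w B hw).trans (le_max_right _ _)⟩
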